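/- arXiv:2006.01931 — 4 statements merged into one kernel-verified Lean document; each statement's English description precedes it below -/
import Mathlib

section
/- Let α be an irrational real number and n ≥ 2 an integer. Then the n-step partition P_n is obtained from the (n−1)-step partition P_{n−1} by subdividing exactly one subinterval of P_{n−1} into two subintervals; consequently the shortest subinterval length of P_{n−1} is at least the shortest subinterval length of P_n, the longest subinterval length of P_{n−1} is at most twice the longest subinterval length of P_n, and hence (shortest length of P_{n−1})/(longest length of P_{n−1}) ≥ (1/2)·(shortest length of P_n)/(longest length of P_n). -/
/-- The points `{0, α, 2α, …, (n−1)α}` reduced mod 1: the endpoints of the `n`-step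
partition of `[0,1)`. -/
def pts (α : ℝ) (n : ℕ) : Set ℝ := {x | ∃ k < n, x = Int.fract (k * α)}

/-- The endpoint (in `pts α n ∪ {1}`) immediately to the right of `p`. -/
noncomputable def nextPt (α : ℝ) (n : ℕ) (p : ℝ) : ℝ :=
  sInf ((pts α n ∪ {1}) ∩ Set.Ioi p)

/-- The subintervals (cells) of the `n`-step partition of `[0,1)`. -/
def cells (α : ℝ) (n : ℕ) : Set (Set ℝ) :=
  {I | ∃ p ∈ pts α n, I = Set.Ico p (nextPt α n p)}

/-- The set of lengths of the subintervals of the `n`-step partition. -/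
def gaps (α : ℝ) (n : ℕ) : Set ℝ :=
  {g | ∃ p ∈ pts α n, g = nextPt α n p - p}

/-!
Irrationality of `α` makes `q = {mα}` a point not already in `S = {0, α, …, (m−1)α} mod 1`,
so `P_{m+1}` comes from `P_m` by inserting one point. Inserting `q` into a finite `S ⊆ [0,1)`
changes the right neighbour of exactly one point, the predecessor `p₀` of `q` in `S`: the cell
`[p₀, t)` splits into `[p₀, q)` and `[q, t)` and all other cells survive. Hence every old length
is a new length except `t - p₀`, which is the sum of two new lengths; this gives both bounds, and
the ratio bound follows from them.
-/

open Set

noncomputable def nextAbove (S : Set ℝ) (p : ℝ) : ℝ :=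
  sInf ((S ∪ {1}) ∩ Ioi p)

def cellsOf (S : Set ℝ) : Set (Set ℝ) :=
  {I | ∃ p ∈ S, I = Ico p (nextAbove S p)}

def gapsOf (S : Set ℝ) : Set ℝ :=
  {g | ∃ p ∈ S, g = nextAbove S p - p}

section NextAbove

variable {S : Set ℝ} {p q : ℝ}

lemma bddBelow_nextAbove_set (S : Set ℝ) (p : ℝ) : BddBelow ((S ∪ {1}) ∩ Ioi p) :=
  ⟨p, fun _ hx => hx.2.le⟩

lemma nextAbove_mem (hS : S.Finite) (hp : p < 1) : nextAbove S p ∈ (S ∪ {1}) ∩ Ioi p :=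
  Nonempty.csInf_mem ⟨1, Or.inr rfl, hp⟩ ((hS.union (finite_singleton 1)).inter_of_left _)

lemma le_nextAbove (hp : p < 1) : p ≤ nextAbove S p :=
  le_csInf ⟨1, Or.inr rfl, hp⟩ fun _ hx => hx.2.le

lemma nextAbove_le {x : ℝ} (hx : x ∈ S ∪ {1}) (hpx : p < x) : nextAbove S p ≤ x :=
  csInf_le (bddBelow_nextAbove_set S p) ⟨hx, hpx⟩

lemma nextAbove_insert_of_le (h : q ≤ p) : nextAbove (insert q S) p = nextAbove S p := by
  have : (insert q S ∪ {1}) ∩ Ioi p = (S ∪ {1}) ∩ Ioi p := by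
    ext x
    simp only [mem_inter_iff, mem_union, mem_insert_iff, mem_singleton_iff, mem_Ioi]
    constructor
    · rintro ⟨(rfl | hx) | hx, hpx⟩ <;> first | exact absurd hpx h.not_gt | tauto
    · tauto
  rw [nextAbove, this, nextAbove]

lemma nextAbove_insert_of_lt (hp : p < 1) (h : p < q) :
    nextAbove (insert q S) p = min q (nextAbove S p) := by
  have : (insert q S ∪ {1}) ∩ Ioi p = insert q ((S ∪ {1}) ∩ Ioi p) := by
    ext x
    simp only [mem_inter_iff, mem_union, mem_insert_iff, mem_singleton_iff, mem_Ioi]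
    constructor
    · tauto
    · rintro (rfl | h') <;> tauto
  rw [nextAbove, this, csInf_insert (bddBelow_nextAbove_set S p) ⟨1, Or.inr rfl, hp⟩]
  rfl

end NextAbove

section InsertPoint

variable {S : Set ℝ} {q p₀ : ℝ}

lemma lt_nextAbove_predecessor (hS : S.Finite) (hqS : q ∉ S) (hq1 : q < 1)
    (hp₀ : IsGreatest (S ∩ Iio q) p₀) : q < nextAbove S p₀ := by
  obtain ⟨hmem, hp₀lt⟩ := nextAbove_mem hS (hp₀.1.2.trans hq1)
  by_contra! hle
  rcases hmem with hs | h1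
  · rcases hle.lt_or_eq with hlt | heq
    · exact (hp₀.2 ⟨hs, hlt⟩).not_gt hp₀lt
    · exact hqS (heq ▸ hs)
  · exact (h1 ▸ hle).not_gt hq1

lemma nextAbove_insert_predecessor (hS : S.Finite) (hqS : q ∉ S) (hq1 : q < 1)
    (hp₀ : IsGreatest (S ∩ Iio q) p₀) : nextAbove (insert q S) p₀ = q := by
  rw [nextAbove_insert_of_lt (hp₀.1.2.trans hq1) hp₀.1.2,
    min_eq_left (lt_nextAbove_predecessor hS hqS hq1 hp₀).le]

lemma nextAbove_insert_self (hqS : q ∉ S) (hq1 : q < 1) (hp₀ : IsGreatest (S ∩ Iio q) p₀) :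
    nextAbove (insert q S) q = nextAbove S p₀ := by
  rw [nextAbove_insert_of_le le_rfl, nextAbove, nextAbove]
  -- no point of `S` lies in `(p₀, q]`
  congr 1
  ext x
  simp only [mem_inter_iff, mem_union, mem_singleton_iff, mem_Ioi]
  constructor
  · rintro ⟨hx, hqx⟩
    exact ⟨hx, hp₀.1.2.trans hqx⟩
  · rintro ⟨hx | rfl, hp₀x⟩
    · refine ⟨Or.inl hx, lt_of_not_ge fun hxq => ?_⟩
      rcases hxq.lt_or_eq with hlt | rfl
      · exact (hp₀.2 ⟨hx, hlt⟩).not_gt hp₀x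
      · exact hqS hx
    · exact ⟨Or.inr rfl, hq1⟩

lemma nextAbove_insert_of_ne (hS1 : ∀ s ∈ S, s < 1) (hp₀ : IsGreatest (S ∩ Iio q) p₀)
    {p : ℝ} (hp : p ∈ S) (hne : p ≠ p₀) : nextAbove (insert q S) p = nextAbove S p := by
  rcases lt_or_ge p q with hpq | hqp
  · have hpp₀ : p < p₀ := (hp₀.2 ⟨hp, hpq⟩).lt_of_ne hne
    have hle : nextAbove S p ≤ p₀ := nextAbove_le (Or.inl hp₀.1.1) hpp₀
    rw [nextAbove_insert_of_lt (hS1 p hp) hpq, min_eq_right (hle.trans hp₀.1.2.le)]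
  · exact nextAbove_insert_of_le hqp

end InsertPoint

section Cells

variable {S : Set ℝ} {q p₀ : ℝ}

lemma Ico_mem_cellsOf_iff {a b : ℝ} (hab : a < b) :
    Ico a b ∈ cellsOf S ↔ a ∈ S ∧ nextAbove S a = b := by
  constructor
  · rintro ⟨p, hp, e⟩
    obtain ⟨rfl, rfl⟩ := (Ico_eq_Ico_iff (Or.inl hab)).1 e
    exact ⟨hp, rfl⟩
  · rintro ⟨ha, rfl⟩
    exact ⟨a, ha, rfl⟩

lemma cellsOf_diff_cellsOf_insert (hS : S.Finite) (hS1 : ∀ s ∈ S, s < 1) (hqS : q ∉ S)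
    (hq1 : q < 1) (hp₀ : IsGreatest (S ∩ Iio q) p₀) :
    cellsOf S \ cellsOf (insert q S) = {Ico p₀ (nextAbove S p₀)} := by
  have hqt := lt_nextAbove_predecessor hS hqS hq1 hp₀
  ext X
  simp only [mem_sdiff, mem_singleton_iff]
  constructor
  · rintro ⟨⟨p, hp, rfl⟩, hX⟩
    by_cases hne : p = p₀
    · rw [hne]
    · exact absurd ⟨p, mem_insert_of_mem q hp, by rw [nextAbove_insert_of_ne hS1 hp₀ hp hne]⟩ hX
  · rintro rfl
    refine ⟨⟨p₀, hp₀.1.1, rfl⟩, fun h => ?_⟩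
    have := ((Ico_mem_cellsOf_iff (hp₀.1.2.trans hqt)).1 h).2
    rw [nextAbove_insert_predecessor hS hqS hq1 hp₀] at this
    exact hqt.ne this

lemma cellsOf_insert_diff_cellsOf (hS : S.Finite) (hS1 : ∀ s ∈ S, s < 1) (hqS : q ∉ S)
    (hq1 : q < 1) (hp₀ : IsGreatest (S ∩ Iio q) p₀) :
    cellsOf (insert q S) \ cellsOf S = {Ico p₀ q, Ico q (nextAbove S p₀)} := by
  have hqt := lt_nextAbove_predecessor hS hqS hq1 hp₀
  ext X
  simp only [mem_sdiff, mem_insert_iff, mem_singleton_iff]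
  constructor
  · rintro ⟨⟨p, rfl | hp, rfl⟩, hX⟩
    · exact Or.inr (by rw [nextAbove_insert_self hqS hq1 hp₀])
    · by_cases hne : p = p₀
      · exact Or.inl (by rw [hne, nextAbove_insert_predecessor hS hqS hq1 hp₀])
      · exact absurd ⟨p, hp, by rw [nextAbove_insert_of_ne hS1 hp₀ hp hne]⟩ hX
  · rintro (rfl | rfl)
    · refine ⟨⟨p₀, mem_insert_of_mem q hp₀.1.1, by
        rw [nextAbove_insert_predecessor hS hqS hq1 hp₀]⟩, fun h => ?_⟩
      exact hqt.ne' ((Ico_mem_cellsOf_iff hp₀.1.2).1 h).2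
    · refine ⟨⟨q, mem_insert q S, by rw [nextAbove_insert_self hqS hq1 hp₀]⟩, fun h => ?_⟩
      exact hqS ((Ico_mem_cellsOf_iff hqt).1 h).1

end Cells

section Gaps

variable {S : Set ℝ} {q p₀ : ℝ}

lemma gapsOf_finite (hS : S.Finite) : (gapsOf S).Finite :=
  (hS.image fun p => nextAbove S p - p).subset (by rintro g ⟨p, hp, rfl⟩; exact ⟨p, hp, rfl⟩)

lemma sInf_gapsOf_nonneg (hS1 : ∀ s ∈ S, s < 1) : 0 ≤ sInf (gapsOf S) :=
  Real.sInf_nonneg fun _ ⟨p, hp, e⟩ => e ▸ sub_nonneg.2 (le_nextAbove (hS1 p hp))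

lemma mem_gapsOf_insert_of_ne (hS1 : ∀ s ∈ S, s < 1) (hp₀ : IsGreatest (S ∩ Iio q) p₀)
    {p : ℝ} (hp : p ∈ S) (hne : p ≠ p₀) : nextAbove S p - p ∈ gapsOf (insert q S) :=
  ⟨p, mem_insert_of_mem q hp, by rw [nextAbove_insert_of_ne hS1 hp₀ hp hne]⟩

lemma sInf_gapsOf_insert_le (hS : S.Finite) (hS1 : ∀ s ∈ S, s < 1) (hqS : q ∉ S)
    (hq1 : q < 1) (hp₀ : IsGreatest (S ∩ Iio q) p₀) :
    sInf (gapsOf (insert q S)) ≤ sInf (gapsOf S) := by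
  have hbdd := (gapsOf_finite (hS.insert q)).bddBelow
  refine le_csInf ⟨_, p₀, hp₀.1.1, rfl⟩ ?_
  rintro g ⟨p, hp, rfl⟩
  by_cases hne : p = p₀
  · subst hne
    calc sInf (gapsOf (insert q S)) ≤ q - p := csInf_le hbdd
          ⟨p, mem_insert_of_mem q hp, by rw [nextAbove_insert_predecessor hS hqS hq1 hp₀]⟩
      _ ≤ nextAbove S p - p := by linarith [lt_nextAbove_predecessor hS hqS hq1 hp₀]
  · exact csInf_le hbdd (mem_gapsOf_insert_of_ne hS1 hp₀ hp hne)

lemma sSup_gapsOf_le_two_mul_sSup_gapsOf_insert (hS : S.Finite) (hS1 : ∀ s ∈ S, s < 1)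
    (hqS : q ∉ S) (hq1 : q < 1) (hp₀ : IsGreatest (S ∩ Iio q) p₀) :
    sSup (gapsOf S) ≤ 2 * sSup (gapsOf (insert q S)) := by
  have hbdd := (gapsOf_finite (hS.insert q)).bddAbove
  have hleft : q - p₀ ≤ sSup (gapsOf (insert q S)) := le_csSup hbdd
    ⟨p₀, mem_insert_of_mem q hp₀.1.1, by rw [nextAbove_insert_predecessor hS hqS hq1 hp₀]⟩
  have hright : nextAbove S p₀ - q ≤ sSup (gapsOf (insert q S)) := le_csSup hbdd
    ⟨q, mem_insert q S, by rw [nextAbove_insert_self hqS hq1 hp₀]⟩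
  have hpos : 0 < q - p₀ := sub_pos.2 hp₀.1.2
  refine csSup_le ⟨_, p₀, hp₀.1.1, rfl⟩ ?_
  rintro g ⟨p, hp, rfl⟩
  by_cases hne : p = p₀
  · subst hne
    linarith
  · linarith [le_csSup hbdd (mem_gapsOf_insert_of_ne hS1 hp₀ hp hne)]

lemma half_mul_gap_ratio_insert_le (hS : S.Finite) (hS1 : ∀ s ∈ S, s < 1) (hqS : q ∉ S)
    (hq1 : q < 1) (hp₀ : IsGreatest (S ∩ Iio q) p₀) :
    1 / 2 * (sInf (gapsOf (insert q S)) / sSup (gapsOf (insert q S))) ≤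
      sInf (gapsOf S) / sSup (gapsOf S) := by
  have hInf := sInf_gapsOf_insert_le hS hS1 hqS hq1 hp₀
  have hSup := sSup_gapsOf_le_two_mul_sSup_gapsOf_insert hS hS1 hqS hq1 hp₀
  have hInf_nonneg : 0 ≤ sInf (gapsOf (insert q S)) :=
    sInf_gapsOf_nonneg (forall_mem_insert.2 ⟨hq1, hS1⟩)
  have hSup_pos : 0 < sSup (gapsOf S) :=
    (sub_pos.2 (hp₀.1.2.trans (lt_nextAbove_predecessor hS hqS hq1 hp₀))).trans_le
      (le_csSup (gapsOf_finite hS).bddAbove ⟨_, hp₀.1.1, rfl⟩)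
  calc 1 / 2 * (sInf (gapsOf (insert q S)) / sSup (gapsOf (insert q S)))
      = sInf (gapsOf (insert q S)) / (2 * sSup (gapsOf (insert q S))) := by ring
    _ ≤ sInf (gapsOf S) / sSup (gapsOf S) :=
      div_le_div₀ (hInf_nonneg.trans hInf) hInf hSup_pos hSup

end Gaps

section Orbit

lemma cells_eq_cellsOf (α : ℝ) (n : ℕ) : cells α n = cellsOf (pts α n) := rfl

lemma gaps_eq_gapsOf (α : ℝ) (n : ℕ) : gaps α n = gapsOf (pts α n) := rfl

lemma pts_finite (α : ℝ) (n : ℕ) : (pts α n).Finite :=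
  ((finite_Iio n).image fun k : ℕ => Int.fract (k * α)).subset
    (by rintro x ⟨k, hk, rfl⟩; exact ⟨k, hk, rfl⟩)

lemma lt_one_of_mem_pts {α : ℝ} {n : ℕ} : ∀ x ∈ pts α n, x < 1 := by
  rintro x ⟨k, -, rfl⟩
  exact Int.fract_lt_one _

lemma zero_mem_pts (α : ℝ) {n : ℕ} (hn : 0 < n) : (0 : ℝ) ∈ pts α n :=
  ⟨0, hn, by simp⟩

lemma pts_succ (α : ℝ) (m : ℕ) : pts α (m + 1) = insert (Int.fract (m * α)) (pts α m) := by
  ext x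
  simp only [pts, mem_ofPred_eq, mem_insert_iff, Nat.lt_succ_iff_lt_or_eq, or_and_right,
    exists_or, exists_eq_left]
  exact or_comm

lemma fract_mul_not_mem_pts {α : ℝ} (hα : Irrational α) (m : ℕ) :
    Int.fract (m * α) ∉ pts α m := by
  rintro ⟨k, hk, hkm⟩
  obtain ⟨z, hz⟩ := Int.fract_eq_fract.1 hkm
  refine (hα.natCast_mul (m := m - k) (by omega)).ne_int z ?_
  rw [Nat.cast_sub hk.le, ← hz]
  ring

end Orbit

/-- For irrational `α` and `n ≥ 2`, the `n`-step partition is obtained from the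
`(n−1)`-step partition by subdividing exactly one subinterval into two; consequently the
shortest length does not increase backwards, the longest length of `P_{n−1}` is at most
twice that of `P_n`, and the ratio shortest/longest of `P_{n−1}` is at least half that
of `P_n`. -/
theorem step_partition_refinement (α : ℝ) (hα : Irrational α) (n : ℕ) (hn : 2 ≤ n) :
    (∃ I J K : Set ℝ,
        cells α (n - 1) \ cells α n = {I} ∧
        cells α n \ cells α (n - 1) = {J, K} ∧
        J ≠ K ∧ Disjoint J K ∧ I = J ∪ K) ∧
      sInf (gaps α n) ≤ sInf (gaps α (n - 1)) ∧
      sSup (gaps α (n - 1)) ≤ 2 * sSup (gaps α n) ∧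
      (1 / 2) * (sInf (gaps α n) / sSup (gaps α n)) ≤
        sInf (gaps α (n - 1)) / sSup (gaps α (n - 1)) := by
  obtain ⟨m, rfl⟩ : ∃ m, n = m + 1 := ⟨n - 1, by omega⟩
  set q := Int.fract (m * α)
  have hS := pts_finite α m
  have hS1 : ∀ s ∈ pts α m, s < 1 := lt_one_of_mem_pts
  have hqS : q ∉ pts α m := fract_mul_not_mem_pts hα m
  have hq1 : q < 1 := Int.fract_lt_one _
  have h0 : (0 : ℝ) ∈ pts α m := zero_mem_pts α (by omega)
  have hq0 : 0 < q := (Int.fract_nonneg _).lt_of_ne (ne_of_mem_of_not_mem h0 hqS)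
  have hfin := hS.inter_of_left (Iio q)
  have hp₀ : IsGreatest (pts α m ∩ Iio q) (sSup (pts α m ∩ Iio q)) :=
    ⟨Nonempty.csSup_mem ⟨0, h0, hq0⟩ hfin, fun _ hx => le_csSup hfin.bddAbove hx⟩
  have hqt := lt_nextAbove_predecessor hS hqS hq1 hp₀
  simp only [Nat.add_sub_cancel, cells_eq_cellsOf, gaps_eq_gapsOf, pts_succ]
  exact ⟨⟨_, _, _, cellsOf_diff_cellsOf_insert hS hS1 hqS hq1 hp₀,
      cellsOf_insert_diff_cellsOf hS hS1 hqS hq1 hp₀,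
      fun h => (h.symm ▸ left_mem_Ico.2 hqt).2.false, Ico_disjoint_Ico_same,
      (Ico_union_Ico_eq_Ico hp₀.1.2.le hqt.le).symm⟩,
    sInf_gapsOf_insert_le hS hS1 hqS hq1 hp₀,
    sSup_gapsOf_le_two_mul_sSup_gapsOf_insert hS hS1 hqS hq1 hp₀,
    half_mul_gap_ratio_insert_le hS hS1 hqS hq1 hp₀⟩
end

section
/- Let α be an irrational real number whose regular continued fraction expansion has unbounded partial quotients (i.e., α is well approximable). Then there exists a strictly increasing sequence of positive integers (m_j)_{j≥1} such that the ratio (shortest subinterval length of P_{m_j})/(longest subinterval length of P_{m_j}) tends to 1 as j → ∞; moreover for each j the m_j-step partition has only two distinct subinterval lengths. -/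
/-!
A convergent `A / B` of `α` followed by a partial quotient `b` satisfies `|α - A / B| ≤ 1 / (b B²)`,
so its reduced form `r = p / q` has `Δ := q² |α - r| ≤ 1 / b`; as `α` is irrational, `Δ → 0` forces
`q → ∞`.

Write `α = p / q + δ`, so `q |δ| = Δ / q`. For `k < q` the point `{k α}` is `(k p mod q) / q + k δ`,
a shift by less than `1 / q`, so the points are ordered like the residues `k p mod q`: the `j`-th
from the left is `{c_j α}` with `c_j ≡ j s (mod q)`, `s ≡ p⁻¹`. Since `c_{j+1} - c_j ∈ {s, s - q}`,
every gap is `1 / q + s δ` or `1 / q + (s - q) δ`. Both occur, they differ as `δ ≠ 0`, and both lie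
within `Δ / q` of `1 / q`, so their ratio is at least `1 - 2Δ`.
-/

open Set Filter
open GenContFract (of)

namespace GenContFract

variable {K : Type*} [Field K] [LinearOrder K] [FloorRing K]

theorem exists_int_eq_contsAux_of (v : K) : ∀ n, ∃ a b : ℤ, (of v).contsAux n = ⟨a, b⟩
  | 0 => ⟨1, 0, by simp [contsAux]⟩
  | 1 => ⟨⌊v⌋, 1, by simp [contsAux, of_h_eq_floor]⟩
  | n + 2 => by
    obtain ⟨a₀, b₀, h₀⟩ := exists_int_eq_contsAux_of v n
    obtain ⟨a₁, b₁, h₁⟩ := exists_int_eq_contsAux_of v (n + 1)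
    cases hs : (of v).s.get? n with
    | none => rw [contsAux_stable_step_of_terminated hs]; exact ⟨a₁, b₁, h₁⟩
    | some gp =>
      obtain ⟨ha, z, hz⟩ := of_partNum_eq_one_and_exists_int_partDen_eq hs
      refine ⟨z * a₁ + a₀, z * b₁ + b₀, ?_⟩
      rw [contsAux_recurrence hs h₀ h₁]
      simp only [ha, hz, one_mul, Int.cast_add, Int.cast_mul]

end GenContFract

open GenContFract in
theorem Irrational.exists_rat_den_sq_mul_abs_sub_le_inv {α b : ℝ} {n : ℕ} (hα : Irrational α)
    (hb : (of α).partDens.get? n = some b) : ∃ r : ℚ, (r.den : ℝ) ^ 2 * |α - r| ≤ b⁻¹ := by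
  have hnt : ∀ m, ¬(of α).TerminatedAt m := fun m hm => by
    obtain ⟨r, hr⟩ := (terminates_iff_rat α).1 ⟨m, hm⟩
    exact hα ⟨r, hr.symm⟩
  obtain ⟨A, B, hAB⟩ := exists_int_eq_contsAux_of α (n + 1)
  have hnum : (of α).nums n = A := by rw [num_eq_conts_a, nth_cont_eq_succ_nth_contAux, hAB]
  have hden : (of α).dens n = B := by rw [den_eq_conts_b, nth_cont_eq_succ_nth_contAux, hAB]
  have hB : (1 : ℝ) ≤ B := by
    rw [← hden]
    exact le_trans (mod_cast Nat.fib_pos.2 n.succ_pos)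
      (succ_nth_fib_le_of_nth_den (Or.inr (hnt _)))
  have hb1 : 1 ≤ b := of_one_le_get?_partDen hb
  have happrox : |α - A / B| ≤ 1 / (b * B ^ 2) := by
    calc |α - A / B| ≤ 1 / ((of α).dens n * (of α).dens (n + 1)) := by
          rw [← hnum, ← hden]; exact abs_sub_convs_le (hnt n)
      _ ≤ 1 / (b * B ^ 2) := by
          rw [hden]
          refine one_div_le_one_div_of_le (by positivity) ?_
          nlinarith [hden ▸ le_of_succ_get?_den hb]
  refine ⟨A / B, ?_⟩
  have hden_le : ((A / B : ℚ).den : ℝ) ≤ B := by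
    have := Int.le_of_dvd (by exact_mod_cast hB) (Rat.divInt_eq_div A B ▸ Rat.den_dvd A B)
    exact_mod_cast this
  push_cast
  calc ((A / B : ℚ).den : ℝ) ^ 2 * |α - A / B| ≤ B ^ 2 * (1 / (b * B ^ 2)) := by
        gcongr
    _ = b⁻¹ := by field_simp

theorem Rat.abs_den_mul_sub_round_le {α : ℝ} (r : ℚ) :
    |r.den * α - round (r.den * α)| ≤ (r.den : ℝ) ^ 2 * |α - r| := by
  have hq : (1 : ℝ) ≤ r.den := mod_cast r.den_pos
  calc |r.den * α - round (r.den * α)| ≤ |r.den * α - r.num| := round_le _ _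
    _ = r.den * |α - r| := by
        rw [show (r.den : ℝ) * α - r.num = r.den * (α - r) by
          rw [mul_sub, Rat.cast_def, mul_div_cancel₀ _ (by positivity)], abs_mul, Nat.abs_cast]
    _ ≤ (r.den : ℝ) ^ 2 * |α - r| := by
        rw [sq, mul_assoc]
        exact le_mul_of_one_le_left (by positivity) hq

theorem Irrational.exists_pos_le_den_sq_mul_abs_sub {α : ℝ} (hα : Irrational α) :
    ∀ N : ℕ, ∃ δ > 0, ∀ r : ℚ, r.den ≤ N → δ ≤ (r.den : ℝ) ^ 2 * |α - r|
  | 0 => ⟨1, one_pos, fun r hr => absurd r.den_pos (by omega)⟩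
  | N + 1 => by
    obtain ⟨δ, hδ, hle⟩ := hα.exists_pos_le_den_sq_mul_abs_sub N
    have hpos : 0 < |(N + 1 : ℕ) * α - round ((N + 1 : ℕ) * α)| :=
      abs_pos.2 (sub_ne_zero.2 ((hα.natCast_mul N.succ_ne_zero).ne_int _))
    refine ⟨min δ _, lt_min hδ hpos, fun r hr => ?_⟩
    rcases hr.lt_or_eq with hr | hr
    · exact (min_le_left _ _).trans (hle r (Nat.lt_succ_iff.1 hr))
    · exact (min_le_right _ _).trans (hr ▸ r.abs_den_mul_sub_round_le)

theorem Irrational.exists_rat_lt_den_and_den_sq_mul_abs_sub_lt {α : ℝ} (hα : Irrational α)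
    (hub : ∀ B : ℝ, ∃ (n : ℕ) (b : ℝ), (of α).partDens.get? n = some b ∧ B < b)
    {ε : ℝ} (hε : 0 < ε) (N : ℕ) : ∃ r : ℚ, N < r.den ∧ (r.den : ℝ) ^ 2 * |α - r| < ε := by
  obtain ⟨δ, hδ, hδle⟩ := hα.exists_pos_le_den_sq_mul_abs_sub N
  obtain ⟨n, b, hb, hbig⟩ := hub (min ε δ)⁻¹
  obtain ⟨r, hr⟩ := hα.exists_rat_den_sq_mul_abs_sub_le_inv hb
  have hlt : (r.den : ℝ) ^ 2 * |α - r| < min ε δ :=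
    hr.trans_lt (inv_lt_of_inv_lt₀ (lt_min hε hδ) hbig)
  refine ⟨r, not_le.1 fun hN => ?_, hlt.trans_le (min_le_left _ _)⟩
  exact (hδle r hN).not_gt (hlt.trans_le (min_le_right _ _))

theorem nextPt_eq_of_strictMono {α : ℝ} {n j : ℕ} {y : ℕ → ℝ} (hy : StrictMono y) (hn : y n = 1)
    (hpts : pts α n = y '' Iio n) (hj : j < n) : nextPt α n (y j) = y (j + 1) := by
  have hcl : pts α n ∪ {1} = y '' Iic n := by
    rw [hpts, union_singleton, ← hn, ← image_insert_eq, Iio_insert]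
  rw [nextPt, hcl]
  refine IsLeast.csInf_eq ⟨⟨mem_image_of_mem _ (Nat.succ_le_of_lt hj), hy j.lt_succ_self⟩, ?_⟩
  rintro _ ⟨⟨i, -, rfl⟩, hi⟩
  exact hy.monotone (Nat.succ_le_of_lt (hy.lt_iff_lt.1 hi))

theorem gaps_eq_image_of_strictMono {α : ℝ} {n : ℕ} {y : ℕ → ℝ} (hy : StrictMono y) (hn : y n = 1)
    (hpts : pts α n = y '' Iio n) : gaps α n = (fun j => y (j + 1) - y j) '' Iio n := by
  have hnext : ∀ j < n, nextPt α n (y j) - y j = y (j + 1) - y j := fun j hj => by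
    rw [nextPt_eq_of_strictMono hy hn hpts hj]
  unfold gaps
  rw [hpts]
  ext g
  constructor
  · rintro ⟨_, ⟨j, hj, rfl⟩, rfl⟩
    exact ⟨j, hj, (hnext j hj).symm⟩
  · rintro ⟨j, hj, rfl⟩
    exact ⟨y j, mem_image_of_mem _ hj, (hnext j hj).symm⟩

theorem ZMod.val_add_eq_or {n : ℕ} [NeZero n] (a b : ZMod n) :
    (a + b).val = a.val + b.val ∨ (a + b).val + n = a.val + b.val :=
  (lt_or_ge _ _).imp val_add_of_lt fun h => (val_add_val_of_le h).symm

theorem Int.fract_intCast_div_add {q j : ℕ} [NeZero q] {m : ℤ} {t : ℝ} (hm : (m : ZMod q) = j)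
    (h₀ : 0 ≤ j / q + t) (h₁ : j / q + t < 1) : Int.fract ((m : ℝ) / q + t) = j / q + t := by
  obtain ⟨k, hk⟩ := (ZMod.intCast_eq_intCast_iff_dvd_sub m j q).1 (by simpa using hm)
  have hq : (q : ℝ) ≠ 0 := Nat.cast_ne_zero.2 (NeZero.ne q)
  have : (m : ℝ) / q + t = ((-k : ℤ) : ℝ) + (j / q + t) := by
    have : (j : ℝ) - m = q * k := by exact_mod_cast hk
    push_cast
    field_simp
    linarith
  rw [this, Int.fract_intCast_add, Int.fract_eq_self.2 ⟨h₀, h₁⟩]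

namespace TwoGap

variable {q : ℕ} [NeZero q] (s : ZMod q) (δ : ℝ)

/-- For `s = p⁻¹` in `ZMod q`, the `k < q` with `k p ≡ j (mod q)`: the orbit point `{k α}` is the
`j`-th from the left. -/
def hitTime (j : ℕ) : ℕ := ((j : ZMod q) * s).val

noncomputable def sortedPt (j : ℕ) : ℝ := j / q + hitTime s j * δ

omit [NeZero q] in
theorem hitTime_zero : hitTime s 0 = 0 := by simp [hitTime]

omit [NeZero q] in
theorem hitTime_self : hitTime s q = 0 := by simp [hitTime]

theorem hitTime_lt (j : ℕ) : hitTime s j < q := ZMod.val_lt _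

theorem hitTime_succ (j : ℕ) :
    hitTime s (j + 1) = hitTime s j + s.val ∨ hitTime s (j + 1) + q = hitTime s j + s.val := by
  simpa [hitTime, add_mul] using ZMod.val_add_eq_or ((j : ZMod q) * s) s

omit [NeZero q] in
theorem sortedPt_succ_sub_eq (j : ℕ) : sortedPt s δ (j + 1) - sortedPt s δ j =
    1 / q + ((hitTime s (j + 1) : ℝ) - hitTime s j) * δ := by
  simp only [sortedPt]; push_cast; ring

theorem sortedPt_succ_sub (j : ℕ) :
    sortedPt s δ (j + 1) - sortedPt s δ j = 1 / q + s.val * δ ∨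
      sortedPt s δ (j + 1) - sortedPt s δ j = 1 / q + (s.val - q) * δ := by
  rw [sortedPt_succ_sub_eq]
  rcases hitTime_succ s j with h | h
  · have h : (hitTime s (j + 1) : ℝ) = hitTime s j + s.val := by exact_mod_cast h
    left; rw [h, add_sub_cancel_left]
  · have h : (hitTime s (j + 1) : ℝ) + q = hitTime s j + s.val := by exact_mod_cast h
    right; rw [show (hitTime s (j + 1) : ℝ) - hitTime s j = s.val - q by linarith]

theorem abs_val_mul_le : |s.val * δ| ≤ q * |δ| ∧ |(s.val - q) * δ| ≤ q * |δ| := by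
  have hs : (s.val : ℝ) ≤ q := mod_cast (ZMod.val_lt s).le
  have hs₀ : (0 : ℝ) ≤ s.val := s.val.cast_nonneg
  rw [abs_mul, abs_mul]
  constructor <;> gcongr <;> rw [abs_le] <;> constructor <;> linarith

theorem abs_sortedPt_succ_sub_sub_le (j : ℕ) :
    |sortedPt s δ (j + 1) - sortedPt s δ j - 1 / q| ≤ q * |δ| := by
  rcases sortedPt_succ_sub s δ j with h | h <;> rw [h, add_sub_cancel_left]
  exacts [(abs_val_mul_le s δ).1, (abs_val_mul_le s δ).2]

variable {s δ}

theorem strictMono_sortedPt (hδ : q * |δ| < 1 / q) : StrictMono (sortedPt s δ) :=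
  strictMono_nat_of_lt_succ fun j => by
    linarith [abs_le.1 (abs_sortedPt_succ_sub_sub_le s δ j)]

omit [NeZero q] in
theorem sortedPt_zero : sortedPt s δ 0 = 0 := by simp [sortedPt, hitTime_zero]

theorem sortedPt_self : sortedPt s δ q = 1 := by
  simp [sortedPt, hitTime_self, NeZero.ne q]

theorem sortedPt_mem_Ico (hδ : q * |δ| < 1 / q) {j : ℕ} (hj : j < q) :
    sortedPt s δ j ∈ Ico 0 1 := by
  have hmono := strictMono_sortedPt (s := s) hδ
  exact ⟨sortedPt_zero (s := s) (δ := δ) ▸ hmono.monotone j.zero_le,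
    sortedPt_self (s := s) (δ := δ) ▸ hmono hj⟩

variable {α : ℝ} {p : ℤ}

theorem sortedPt_eq_fract (hα : α = p / q + δ) (hps : (p : ZMod q) * s = 1)
    (hδ : q * |δ| < 1 / q) {j : ℕ} (hj : j < q) :
    sortedPt s δ j = Int.fract (hitTime s j * α) := by
  obtain ⟨h₀, h₁⟩ := sortedPt_mem_Ico (s := s) hδ hj
  have hmod : (((hitTime s j * p : ℤ)) : ZMod q) = j := by
    push_cast
    rw [hitTime, ZMod.natCast_zmod_val, mul_assoc, mul_comm s, hps, mul_one]
  have hsplit : (hitTime s j : ℝ) * α = ((hitTime s j * p : ℤ) : ℝ) / q + hitTime s j * δ := by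
    rw [hα]; push_cast; ring
  rw [hsplit]
  exact (Int.fract_intCast_div_add hmod h₀ h₁).symm

theorem hitTime_val_mul (hps : (p : ZMod q) * s = 1) {k : ℕ} (hk : k < q) :
    hitTime s ((k : ZMod q) * (p : ZMod q)).val = k := by
  rw [hitTime, ZMod.natCast_zmod_val, mul_assoc, hps, mul_one, ZMod.val_cast_of_lt hk]

theorem pts_eq_image_sortedPt (hα : α = p / q + δ) (hps : (p : ZMod q) * s = 1)
    (hδ : q * |δ| < 1 / q) : pts α q = sortedPt s δ '' Iio q := by
  ext x
  constructor
  · rintro ⟨k, hk, rfl⟩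
    refine ⟨_, ZMod.val_lt ((k : ZMod q) * (p : ZMod q)), ?_⟩
    rw [sortedPt_eq_fract hα hps hδ (ZMod.val_lt _), hitTime_val_mul hps hk]
  · rintro ⟨j, hj, rfl⟩
    exact ⟨hitTime s j, hitTime_lt s j, sortedPt_eq_fract hα hps hδ hj⟩

theorem gaps_eq_pair (hα : α = p / q + δ) (hps : (p : ZMod q) * s = 1) (hs : s ≠ 0)
    (hδ : q * |δ| < 1 / q) : gaps α q = {1 / q + s.val * δ, 1 / q + (s.val - q) * δ} := by
  have hq : 0 < q := Nat.pos_of_neZero q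
  rw [gaps_eq_image_of_strictMono (strictMono_sortedPt hδ) sortedPt_self
    (pts_eq_image_sortedPt hα hps hδ)]
  refine Subset.antisymm (fun _ ⟨j, _, hj⟩ => hj ▸ sortedPt_succ_sub s δ j) ?_
  refine insert_subset_iff.2 ⟨⟨0, hq, ?_⟩, singleton_subset_iff.2 ⟨q - 1, by simpa using hq, ?_⟩⟩
  · simp [sortedPt_succ_sub_eq, hitTime]
  · have hlast : hitTime s (q - 1) + s.val = q := by
      have := hitTime_succ s (q - 1)
      rw [Nat.sub_add_cancel hq, hitTime_self] at this
      have := ZMod.val_pos.2 hs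
      omega
    have hlast : (hitTime s (q - 1) : ℝ) + s.val = q := mod_cast hlast
    simp only
    rw [sortedPt_succ_sub_eq, Nat.sub_add_cancel hq, hitTime_self]
    push_cast
    linear_combination (-δ) * hlast

end TwoGap

theorem one_sub_two_mul_le_inf_div_sup {a b c Δ : ℝ} (hc : 0 < c) (hΔ : Δ < 1)
    (ha : |a - c| ≤ Δ * c) (hb : |b - c| ≤ Δ * c) :
    1 - 2 * Δ ≤ (a ⊓ b) / (a ⊔ b) ∧ (a ⊓ b) / (a ⊔ b) ≤ 1 := by
  have hinf : (1 - Δ) * c ≤ a ⊓ b := le_inf (by linarith [abs_le.1 ha]) (by linarith [abs_le.1 hb])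
  have hsup : a ⊔ b ≤ (1 + Δ) * c := sup_le (by linarith [abs_le.1 ha]) (by linarith [abs_le.1 hb])
  have hinf₀ : 0 < a ⊓ b := lt_of_lt_of_le (by nlinarith) hinf
  have hsup₀ : 0 < a ⊔ b := hinf₀.trans_le inf_le_sup
  refine ⟨(le_div_iff₀ hsup₀).2 ?_, div_le_one_of_le₀ inf_le_sup hsup₀.le⟩
  rcases le_or_gt (1 - 2 * Δ) 0 with h | h
  · nlinarith
  · calc (1 - 2 * Δ) * (a ⊔ b) ≤ (1 - 2 * Δ) * ((1 + Δ) * c) := by gcongr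
      _ ≤ (1 - Δ) * c := by nlinarith [abs_nonneg (a - c)]
      _ ≤ a ⊓ b := hinf

theorem Irrational.two_gaps_of_den_sq_mul_abs_sub_lt_one {α : ℝ} {r : ℚ} (hα : Irrational α)
    (hr : 2 ≤ r.den) (hΔ : (r.den : ℝ) ^ 2 * |α - r| < 1) :
    (gaps α r.den).ncard = 2 ∧
      1 - 2 * ((r.den : ℝ) ^ 2 * |α - r|) ≤ sInf (gaps α r.den) / sSup (gaps α r.den) ∧
      sInf (gaps α r.den) / sSup (gaps α r.den) ≤ 1 := by
  set q := r.den
  have : NeZero q := ⟨r.den_nz⟩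
  have : Fact (1 < q) := ⟨hr⟩
  have hq : (0 : ℝ) < q := by positivity
  obtain ⟨s, hps⟩ : IsUnit (r.num : ZMod q) :=
    (ZMod.coe_int_isUnit_iff_isCoprime _ _).2 (Int.isCoprime_iff_gcd_eq_one.2 r.reduced.symm)
  set s : ZMod q := ↑s⁻¹
  have hps : (r.num : ZMod q) * s = 1 := hps ▸ Units.mul_inv _
  have hs : s ≠ 0 := fun h => zero_ne_one (by rw [← hps, h, mul_zero])
  have hαr : α = r.num / q + (α - r) := by rw [Rat.cast_def]; ring
  have hδ : q * |α - r| < 1 / q := by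
    rw [lt_div_iff₀ hq]; linarith
  have hδ₀ : α - r ≠ 0 := sub_ne_zero.2 (hα.ne_rat r)
  rw [TwoGap.gaps_eq_pair hαr hps hs hδ, csInf_pair, csSup_pair]
  refine ⟨ncard_pair fun h => hδ₀ ?_, one_sub_two_mul_le_inf_div_sup (one_div_pos.2 hq) hΔ ?_ ?_⟩
  · have : (q : ℝ) * (α - r) = 0 := by linarith
    exact (mul_eq_zero.1 this).resolve_left hq.ne'
  · rw [add_sub_cancel_left]
    exact (TwoGap.abs_val_mul_le s _).1.trans_eq (by field_simp)
  · rw [add_sub_cancel_left]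
    exact (TwoGap.abs_val_mul_le s _).2.trans_eq (by field_simp)

/-- If the irrational `α` has unbounded partial quotients in its regular continued
fraction expansion (i.e. `α` is well approximable), then there is a strictly increasing
sequence `m_j` of positive integers along which the ratio of the shortest to the longest
subinterval length of the `m_j`-step partition tends to `1`, and each such partition has
exactly two distinct subinterval lengths. -/
theorem well_approximable_two_gap_ratio_tendsto_one (α : ℝ) (hα : Irrational α)
    (hub : ∀ B : ℝ, ∃ (n : ℕ) (b : ℝ),
      (GenContFract.of α).partDens.get? n = some b ∧ B < b) :
    ∃ m : ℕ → ℕ, StrictMono m ∧ (∀ j, 1 ≤ m j) ∧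
      Filter.Tendsto (fun j => sInf (gaps α (m j)) / sSup (gaps α (m j)))
        Filter.atTop (nhds 1) ∧
      ∀ j, (gaps α (m j)).ncard = 2 := by
  have hfreq : ∀ j : ℕ, ∃ᶠ q in atTop, 1 ≤ q ∧ (gaps α q).ncard = 2 ∧
      1 - 1 / ((j : ℝ) + 1) ≤ sInf (gaps α q) / sSup (gaps α q) ∧
      sInf (gaps α q) / sSup (gaps α q) ≤ 1 := fun j => frequently_atTop.2 fun N => by
    obtain ⟨r, hN, hr⟩ := hα.exists_rat_lt_den_and_den_sq_mul_abs_sub_lt hub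
      (ε := 1 / (2 * ((j : ℝ) + 1))) (by positivity) (max N 1)
    have hε : 1 / (2 * ((j : ℝ) + 1)) ≤ 1 / 2 := by gcongr; linarith [j.cast_nonneg (α := ℝ)]
    obtain ⟨hcard, hlo, hhi⟩ :=
      hα.two_gaps_of_den_sq_mul_abs_sub_lt_one (r := r) (by omega) (by linarith)
    refine ⟨r.den, by omega, by omega, hcard, le_trans ?_ hlo, hhi⟩
    have h2 : 2 * (1 / (2 * ((j : ℝ) + 1))) = 1 / ((j : ℝ) + 1) := by field_simp
    linarith
  obtain ⟨m, hm, hP⟩ := extraction_forall_of_frequently hfreq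
  refine ⟨m, hm, fun j => (hP j).1, ?_, fun j => (hP j).2.1⟩
  refine tendsto_of_tendsto_of_tendsto_of_le_of_le ?_ tendsto_const_nhds
    (fun j => (hP j).2.2.1) fun j => (hP j).2.2.2
  simpa using (tendsto_one_div_add_atTop_nhds_zero_nat (𝕜 := ℝ)).const_sub 1
end

section
/- Let X ⊆ {0,1}^ℤ be a subshift. Then X is uniquely ergodic if and only if for every word w ∈ L(X) there exists δ ≥ 0 such that for every ε > 0 there is an integer N ≥ 1 with the property that for all u ∈ L(X) with |u| ≥ N, | (number of occurrences of w as a subword of u)/|u| − δ | < ε. Moreover, in this case δ = μ([w]_0^+), where μ is the unique σ-invariant Borel probability measure on X. -/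
open MeasureTheory Filter
open scoped ENNReal

/-- The left shift on bi-infinite binary sequences. -/
def shift (x : ℤ → Bool) : ℤ → Bool := fun n => x (n + 1)

/-- A subshift: a nonempty closed shift-invariant subset of `{0,1}^ℤ`. -/
def IsSubshift (X : Set (ℤ → Bool)) : Prop :=
  X.Nonempty ∧ IsClosed X ∧ shift '' X = X

/-- The one-sided cylinder set `[w]₀⁺` in `X` determined by a word `w`. -/
def cylinder (X : Set (ℤ → Bool)) (w : List Bool) : Set (ℤ → Bool) :=
  {x ∈ X | ∀ j : Fin w.length, x ((j : ℕ) : ℤ) = w.get j}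

/-- The language of words of length `n`. -/
def lang (X : Set (ℤ → Bool)) (n : ℕ) : Set (List Bool) :=
  {w | w.length = n ∧ (cylinder X w).Nonempty}

/-- The word complexity function. -/
noncomputable def complexity (X : Set (ℤ → Bool)) (n : ℕ) : ℕ :=
  (lang X n).ncard

/-- The two-sided orbit of a point under the shift. -/
def orbit (x : ℤ → Bool) : Set (ℤ → Bool) := {y | ∃ k : ℤ, y = fun n => x (n + k)}

/-- A minimal subshift: every orbit is dense. -/
def IsMinimalSubshift (X : Set (ℤ → Bool)) : Prop :=
  IsSubshift X ∧ ∀ x ∈ X, X ⊆ closure (orbit x)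

/-- A shift-invariant Borel probability measure supported on `X`. -/
def InvariantProbOn (X : Set (ℤ → Bool)) (μ : Measure (ℤ → Bool)) : Prop :=
  IsProbabilityMeasure μ ∧ μ Xᶜ = 0 ∧ Measure.map shift μ = μ

/-- Unique ergodicity of a subshift. -/
def UniquelyErgodic (X : Set (ℤ → Bool)) : Prop :=
  ∃! μ : Measure (ℤ → Bool), InvariantProbOn X μ

/-- `v` occurs as a subword of `u` starting at position `i`. -/
def occursAt (v u : List Bool) (i : ℕ) : Prop :=
  i + v.length ≤ u.length ∧ (u.drop i).take v.length = v

/-- The number of occurrences of `v` as a subword of `u`. -/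
noncomputable def occCount (v u : List Bool) : ℕ :=
  Set.ncard {i | occursAt v u i}

/-- The frequency of the word `w` in long words of the language of `X` converges
uniformly to `δ`. -/
def FreqTo (X : Set (ℤ → Bool)) (w : List Bool) (δ : ℝ) : Prop :=
  ∀ ε : ℝ, 0 < ε → ∃ N : ℕ, 1 ≤ N ∧
    ∀ u : List Bool, (cylinder X u).Nonempty → N ≤ u.length →
      |(occCount w u : ℝ) / (u.length : ℝ) - δ| < ε

/-!
The frequency of `w` in a word `x₀ ⋯ xₙ₋₁` of the language differs by at most `(|w| + 1) / n`
from the Birkhoff average `Aₙ` of the indicator of `[w]₀⁺` at `x`, so uniform frequencies of `w`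
mean exactly uniform convergence of `Aₙ` on `X`. Integrating against an invariant measure `μ`
shows that the uniform limit is `μ [w]₀⁺`; as invariant measures are determined by these values,
uniform frequencies force uniqueness, and existence is Krylov–Bogolyubov. Conversely, under unique
ergodicity Birkhoff averages of continuous functions (such as the indicator of the clopen set
`[w]₀⁺`) converge uniformly on `X`: otherwise empirical measures along bad orbit segments would
accumulate at a second invariant measure.
-/

open Set Topology TopologicalSpace
open scoped BoundedContinuousFunction

section Birkhoff

variable {α : Type*} [MeasurableSpace α] {μ : Measure α} {f : α → α} {g : α → ℝ}

lemma integral_birkhoffSum (hf : MeasurePreserving f μ μ) (hg : Integrable g μ) (n : ℕ) :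
    ∫ x, birkhoffSum f g n x ∂μ = n * ∫ x, g x ∂μ := by
  have hcomp (k : ℕ) : ∫ x, g (f^[k] x) ∂μ = ∫ x, g x ∂μ := by
    have hk := hf.iterate k
    rw [← integral_map hk.aemeasurable (by rw [hk.map_eq]; exact hg.aestronglyMeasurable),
      hk.map_eq]
  simp only [birkhoffSum]
  rw [integral_finsetSum (f := fun k x => g (f^[k] x)) _
    fun k _ => (hf.iterate k).integrable_comp_of_integrable hg]
  simp only [hcomp, Finset.sum_const, Finset.card_range, nsmul_eq_mul]

lemma integral_birkhoffAverage (hf : MeasurePreserving f μ μ) (hg : Integrable g μ) {n : ℕ}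
    (hn : n ≠ 0) : ∫ x, birkhoffAverage ℝ f g n x ∂μ = ∫ x, g x ∂μ := by
  simp only [birkhoffAverage, smul_eq_mul]
  rw [integral_const_mul, integral_birkhoffSum hf hg, inv_mul_cancel_left₀ (by exact_mod_cast hn)]

lemma integrable_birkhoffAverage (hf : MeasurePreserving f μ μ) (hg : Integrable g μ) (n : ℕ) :
    Integrable (birkhoffAverage ℝ f g n) μ := by
  have hsum := integrable_finsetSum (Finset.range n) fun k _ =>
    (hf.iterate k).integrable_comp_of_integrable hg
  exact hsum.const_mul (n : ℝ)⁻¹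

lemma integral_eq_of_tendstoUniformlyOn_birkhoffAverage [IsProbabilityMeasure μ]
    (hf : MeasurePreserving f μ μ) (hg : Integrable g μ) {X : Set α} (hX : μ Xᶜ = 0) {c : ℝ}
    (h : TendstoUniformlyOn (birkhoffAverage ℝ f g) (fun _ => c) atTop X) :
    ∫ x, g x ∂μ = c := by
  refine eq_of_forall_dist_le fun ε hε => ?_
  obtain ⟨n, hnX, hn⟩ :=
    ((Metric.tendstoUniformlyOn_iff.1 h ε hε).and (eventually_ne_atTop 0)).exists
  have hbound : ∀ᵐ x ∂μ, ‖birkhoffAverage ℝ f g n x - c‖ ≤ ε := by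
    filter_upwards [mem_ae_iff.2 hX] with x hx
    rw [← dist_eq_norm, dist_comm]
    exact (hnX x hx).le
  calc dist (∫ x, g x ∂μ) c = ‖∫ x, (birkhoffAverage ℝ f g n x - c) ∂μ‖ := by
        rw [integral_sub (integrable_birkhoffAverage hf hg n) (integrable_const c),
          integral_birkhoffAverage hf hg hn, integral_const, probReal_univ, one_smul, dist_eq_norm]
    _ ≤ ε * μ.real univ := norm_integral_le_of_norm_le_const hbound
    _ = ε := by rw [probReal_univ, mul_one]

end Birkhoff

lemma abs_birkhoffSum_indicator_sub_le {α : Type*} (f : α → α) (S : Set α) (x : α) (a b : ℕ) :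
    |birkhoffSum f (S.indicator (1 : α → ℝ)) a x - birkhoffSum f (S.indicator 1) b x| ≤
      |(a : ℝ) - b| := by
  wlog hab : a ≤ b generalizing a b
  · rw [abs_sub_comm, abs_sub_comm (a : ℝ)]
    exact this b a (le_of_not_ge hab)
  obtain ⟨k, rfl⟩ := Nat.exists_eq_add_of_le hab
  have h0 : 0 ≤ birkhoffSum f (S.indicator (1 : α → ℝ)) k (f^[a] x) :=
    Finset.sum_nonneg fun i _ => Set.indicator_nonneg (fun _ _ => zero_le_one) _
  have h1 : birkhoffSum f (S.indicator (1 : α → ℝ)) k (f^[a] x) ≤ k := by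
    have := Finset.sum_le_card_nsmul (Finset.range k)
      (fun i => S.indicator (1 : α → ℝ) (f^[i] (f^[a] x))) 1 fun i _ =>
        Set.indicator_apply_le' (fun _ => le_rfl) (fun _ => zero_le_one)
    simpa [birkhoffSum] using this
  rw [birkhoffSum_add, Nat.cast_add, sub_add_cancel_left, sub_add_cancel_left, abs_neg, abs_neg,
    abs_of_nonneg h0, Nat.abs_cast]
  exact h1

section Empirical

variable {α : Type*} [MeasurableSpace α] {f : α → α}

noncomputable def empiricalMeasure (f : α → α) (x : α) (n : ℕ) : Measure α :=
  (n : ℝ≥0∞)⁻¹ • ∑ k ∈ Finset.range n, Measure.dirac (f^[k] x)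

lemma isProbabilityMeasure_empiricalMeasure (x : α) {n : ℕ} (hn : n ≠ 0) :
    IsProbabilityMeasure (empiricalMeasure f x n) := by
  constructor
  simp [empiricalMeasure, ENNReal.inv_mul_cancel (Nat.cast_ne_zero.2 hn) (ENNReal.natCast_ne_top n)]

variable [MeasurableSingletonClass α]

lemma integral_empiricalMeasure (g : α → ℝ) (x : α) (n : ℕ) :
    ∫ y, g y ∂empiricalMeasure f x n = birkhoffAverage ℝ f g n x := by
  rw [empiricalMeasure, integral_smul_measure,
    integral_finsetSum_measure fun k _ => integrable_dirac enorm_lt_top]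
  simp [birkhoffAverage, birkhoffSum, integral_dirac]

lemma empiricalMeasure_compl_eq_zero {X : Set α} (hfX : MapsTo f X X) {x : α} (hx : x ∈ X)
    (n : ℕ) : empiricalMeasure f x n Xᶜ = 0 := by
  simp [empiricalMeasure, Measure.dirac_apply, hfX.iterate _ hx]

end Empirical

section KrylovBogolyubov

variable {α : Type*} [TopologicalSpace α] [T2Space α] [MeasurableSpace α] [BorelSpace α]
  [HasOuterApproxClosed α] {f : α → α} {ι : Type*} {L : Filter ι} {x : ι → α} {n : ι → ℕ}
  {P : ι → ProbabilityMeasure α} {ν : ProbabilityMeasure α}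

/-- The integrals of `g ∘ f` and `g` against `empiricalMeasure f x n` differ by at most
`2‖g‖ / n`, which tends to zero. -/
lemma map_eq_of_tendsto_empiricalMeasure [L.NeBot] (hf : Continuous f)
    (hP : ∀ i, (P i : Measure α) = empiricalMeasure f (x i) (n i)) (hn : Tendsto n L atTop)
    (hν : Tendsto P L (𝓝 ν)) : (ν : Measure α).map f = ν := by
  have : IsProbabilityMeasure ((ν : Measure α).map f) :=
    Measure.isProbabilityMeasure_map hf.aemeasurable
  refine ext_of_forall_integral_eq_of_IsFiniteMeasure fun g => ?_
  rw [integral_map hf.aemeasurable g.continuous.aestronglyMeasurable]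
  have hlim (h : α →ᵇ ℝ) :
      Tendsto (fun i => birkhoffAverage ℝ f h (n i) (x i)) L (𝓝 (∫ y, h y ∂ν)) := by
    simpa [hP, integral_empiricalMeasure] using
      ProbabilityMeasure.tendsto_iff_forall_integral_tendsto.1 hν h
  have hdiff : Tendsto (fun i => birkhoffAverage ℝ f g (n i) (f (x i)) -
      birkhoffAverage ℝ f g (n i) (x i)) L (𝓝 0) := by
    refine squeeze_zero_norm (fun i => ?_)
      ((tendsto_const_div_atTop_nhds_zero_nat (2 * ‖g‖)).comp hn)
    rw [← dist_eq_norm, dist_birkhoffAverage_apply_birkhoffAverage, Function.comp_apply]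
    gcongr
    exact g.dist_le_two_norm _ _
  have hcomp : Tendsto (fun i => birkhoffAverage ℝ f g (n i) (f (x i))) L
      (𝓝 (∫ y, g (f y) ∂ν)) := by
    simpa [birkhoffAverage, birkhoffSum, ← Function.iterate_succ_apply,
      Function.iterate_succ_apply'] using hlim (g.compContinuous ⟨f, hf⟩)
  exact sub_eq_zero.1 (tendsto_nhds_unique (hcomp.sub (hlim g)) hdiff)

lemma measure_compl_eq_zero_of_tendsto_empiricalMeasure [L.NeBot] {X : Set α} (hX : IsClosed X)
    (hfX : MapsTo f X X) (hx : ∀ i, x i ∈ X)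
    (hP : ∀ i, (P i : Measure α) = empiricalMeasure f (x i) (n i)) (hν : Tendsto P L (𝓝 ν)) :
    (ν : Measure α) Xᶜ = 0 := by
  have hPX (i : ι) : (P i : Measure α) X = 1 := by
    rw [← prob_compl_eq_zero_iff hX.measurableSet, hP, empiricalMeasure_compl_eq_zero hfX (hx i)]
  have := ProbabilityMeasure.limsup_measure_closed_le_of_tendsto hν hX
  simp only [hPX, limsup_const] at this
  exact (prob_compl_eq_zero_iff hX.measurableSet).2 (le_antisymm prob_le_one this)

variable [CompactSpace α]

/-- Krylov–Bogolyubov. -/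
theorem exists_invariant_tendsto_birkhoffAverage (hf : Continuous f) {X : Set α} (hX : IsClosed X)
    (hfX : MapsTo f X X) {x : ℕ → α} (hx : ∀ k, x k ∈ X) {n : ℕ → ℕ} (hn0 : ∀ k, n k ≠ 0)
    (hn : Tendsto n atTop atTop) :
    ∃ (L : Filter ℕ) (_ : L.NeBot) (ν : Measure α),
      (IsProbabilityMeasure ν ∧ ν Xᶜ = 0 ∧ ν.map f = ν) ∧
      ∀ g : α →ᵇ ℝ, Tendsto (fun k => birkhoffAverage ℝ f g (n k) (x k)) L (𝓝 (∫ y, g y ∂ν)) := by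
  let P (k : ℕ) : ProbabilityMeasure α :=
    ⟨empiricalMeasure f (x k) (n k), isProbabilityMeasure_empiricalMeasure _ (hn0 k)⟩
  let L : Ultrafilter ℕ := .of atTop
  obtain ⟨ν, -, hν⟩ := isCompact_univ.ultrafilter_le_nhds (L.map P) (by simp)
  have hνlim : Tendsto P L (𝓝 ν) := hν
  refine ⟨L, inferInstance, ν, ⟨inferInstance,
    measure_compl_eq_zero_of_tendsto_empiricalMeasure hX hfX hx (fun _ => rfl) hνlim,
    map_eq_of_tendsto_empiricalMeasure hf (fun _ => rfl) (hn.mono_left (Ultrafilter.of_le _))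
      hνlim⟩, fun g => ?_⟩
  simpa [P, integral_empiricalMeasure] using
    ProbabilityMeasure.tendsto_iff_forall_integral_tendsto.1 hνlim g

/-- Bad orbit segments would produce, by Krylov–Bogolyubov, an invariant measure against which
`g` does not integrate to `∫ g ∂μ`. -/
theorem tendstoUniformlyOn_birkhoffAverage_of_unique (hf : Continuous f) {X : Set α}
    (hX : IsClosed X) (hfX : MapsTo f X X) {μ : Measure α}
    (hμ : ∀ ν : Measure α, IsProbabilityMeasure ν ∧ ν Xᶜ = 0 ∧ ν.map f = ν → ν = μ)
    (g : α →ᵇ ℝ) :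
    TendstoUniformlyOn (birkhoffAverage ℝ f g) (fun _ => ∫ y, g y ∂μ) atTop X := by
  rw [Metric.tendstoUniformlyOn_iff]
  by_contra! hbad
  obtain ⟨ε, hε, hfreq⟩ := hbad
  obtain ⟨n, x, hn, hx, hfar⟩ : ∃ (n : ℕ → ℕ) (x : ℕ → α), (∀ k, k < n k) ∧ (∀ k, x k ∈ X) ∧
      ∀ k, ε ≤ dist (∫ y, g y ∂μ) (birkhoffAverage ℝ f g (n k) (x k)) := by
    choose n hn x hx hfar using fun k => frequently_atTop.1 hfreq (k + 1)
    exact ⟨n, x, fun k => hn k, hx, hfar⟩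
  obtain ⟨L, _, ν, hνinv, hνlim⟩ := exists_invariant_tendsto_birkhoffAverage hf hX hfX hx
    (fun k => (hn k).ne_bot) (tendsto_atTop_mono (fun k => (hn k).le) tendsto_id)
  rw [hμ ν hνinv] at hνlim
  have h0 := (tendsto_const_nhds (x := ∫ y, g y ∂μ)).dist (hνlim g)
  rw [dist_self] at h0
  exact hε.not_ge (ge_of_tendsto' h0 hfar)

end KrylovBogolyubov

lemma continuous_shift : Continuous shift :=
  continuous_pi fun n => continuous_apply (n + 1)

lemma shift_iterate_apply (i : ℕ) (x : ℤ → Bool) (n : ℤ) : shift^[i] x n = x (n + i) := by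
  induction i generalizing x with
  | zero => simp
  | succ i ih =>
    rw [Function.iterate_succ_apply, ih, shift]
    push_cast
    ring_nf

lemma cylinder_eq_inter (X : Set (ℤ → Bool)) (w : List Bool) :
    cylinder X w = X ∩ cylinder univ w := by
  ext x
  simp [_root_.cylinder]

lemma measure_cylinder_of_compl_eq_zero {X : Set (ℤ → Bool)} {μ : Measure (ℤ → Bool)}
    (hX : μ Xᶜ = 0) (w : List Bool) : μ (cylinder X w) = μ (cylinder univ w) := by
  rw [cylinder_eq_inter, inter_comm, measure_inter_conull hX]

lemma isClopen_cylinder_univ (w : List Bool) : IsClopen (cylinder univ w) := by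
  have : cylinder univ w = (fun x (j : Fin w.length) => x (j : ℤ)) ⁻¹' {w.get} := by
    ext x
    simp [_root_.cylinder, funext_iff]
  rw [this]
  exact (isClopen_discrete _).preimage (continuous_pi fun j => continuous_apply _)

def prefixWord (x : ℤ → Bool) (n : ℕ) : List Bool :=
  List.ofFn fun j : Fin n => x j

@[simp] lemma length_prefixWord (x : ℤ → Bool) (n : ℕ) : (prefixWord x n).length = n := by
  simp [prefixWord]

lemma mem_cylinder_iff_prefixWord {X : Set (ℤ → Bool)} {w : List Bool} {x : ℤ → Bool} :
    x ∈ cylinder X w ↔ x ∈ X ∧ prefixWord x w.length = w := by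
  simp [_root_.cylinder, prefixWord, List.ext_getElem_iff, Fin.forall_iff]

lemma take_drop_prefixWord (x : ℤ → Bool) {i m n : ℕ} (h : i + m ≤ n) :
    ((prefixWord x n).drop i).take m = prefixWord (shift^[i] x) m := by
  apply List.ext_getElem
  · simp
    omega
  · intro j _ _
    simp [prefixWord, shift_iterate_apply, add_comm]

lemma occursAt_prefixWord_iff {w : List Bool} {x : ℤ → Bool} {n i : ℕ} :
    occursAt w (prefixWord x n) i ↔ i + w.length ≤ n ∧ shift^[i] x ∈ cylinder univ w := by
  simp only [occursAt, length_prefixWord]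
  refine and_congr_right fun h => ?_
  rw [take_drop_prefixWord x h, mem_cylinder_iff_prefixWord]
  simp

lemma occCount_prefixWord (w : List Bool) (x : ℤ → Bool) (n : ℕ) :
    (occCount w (prefixWord x n) : ℝ) =
      birkhoffSum shift ((cylinder univ w).indicator 1) (n + 1 - w.length) x := by
  classical
  have : {i | occursAt w (prefixWord x n) i} =
      ↑((Finset.range (n + 1 - w.length)).filter fun i => shift^[i] x ∈ cylinder univ w) := by
    ext i
    simp only [occursAt_prefixWord_iff, mem_ofPred_eq, Finset.coe_filter, Finset.mem_range]
    exact and_congr_left fun _ => by omega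
  rw [occCount, this, Set.ncard_coe_finset, Finset.natCast_card_filter]
  simp [birkhoffSum, Set.indicator_apply]

/-- The `+ 1` is needed for the empty word, which occurs `n + 1` times in a word of length `n`. -/
lemma abs_occCount_prefixWord_div_sub_birkhoffAverage_le (w : List Bool) (x : ℤ → Bool) {n : ℕ}
    (hn : n ≠ 0) :
    |(occCount w (prefixWord x n) : ℝ) / n -
        birkhoffAverage ℝ shift ((cylinder univ w).indicator 1) n x| ≤ (w.length + 1) / n := by
  rw [occCount_prefixWord, birkhoffAverage, smul_eq_mul, inv_mul_eq_div, ← sub_div, abs_div,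
    Nat.abs_cast]
  gcongr
  refine (abs_birkhoffSum_indicator_sub_le _ _ _ _ _).trans (abs_le.2 ⟨?_, ?_⟩)
  · have : n ≤ n + 1 - w.length + w.length := by omega
    have : (n : ℝ) ≤ (n + 1 - w.length : ℕ) + w.length := by exact_mod_cast this
    linarith
  · have : n + 1 - w.length ≤ n + 1 := by omega
    have : ((n + 1 - w.length : ℕ) : ℝ) ≤ n + 1 := by exact_mod_cast this
    linarith [(w.length.cast_nonneg : (0 : ℝ) ≤ w.length)]

lemma freqTo_iff_tendstoUniformlyOn {X : Set (ℤ → Bool)} {w : List Bool} {δ : ℝ} :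
    FreqTo X w δ ↔ TendstoUniformlyOn (birkhoffAverage ℝ shift ((cylinder univ w).indicator 1))
      (fun _ => δ) atTop X := by
  have hsmall {ε : ℝ} (hε : 0 < ε) : ∀ᶠ n : ℕ in atTop, n ≠ 0 ∧ ((w.length : ℝ) + 1) / n < ε :=
    (eventually_ne_atTop 0).and
      ((tendsto_const_div_atTop_nhds_zero_nat _).eventually (gt_mem_nhds hε))
  rw [Metric.tendstoUniformlyOn_iff]
  constructor
  · intro hf ε hε
    obtain ⟨N, -, hN⟩ := hf (ε / 2) (by positivity)
    filter_upwards [eventually_ge_atTop N, hsmall (half_pos hε)] with n hNn ⟨hn, hsm⟩ x hx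
    have hfreq := hN (prefixWord x n) ⟨x, mem_cylinder_iff_prefixWord.2 ⟨hx, by simp⟩⟩
      (by simpa using hNn)
    have hcount := abs_occCount_prefixWord_div_sub_birkhoffAverage_le w x hn
    rw [length_prefixWord] at hfreq
    rw [Real.dist_eq, abs_lt]
    constructor <;> linarith [abs_lt.1 hfreq, abs_le.1 hcount]
  · intro h ε hε
    obtain ⟨N, hN⟩ := eventually_atTop.1 ((h (ε / 2) (half_pos hε)).and (hsmall (half_pos hε)))
    refine ⟨N + 1, by omega, fun u ⟨x, hx⟩ hu => ?_⟩
    obtain ⟨hxX, hxu⟩ := mem_cylinder_iff_prefixWord.1 hx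
    obtain ⟨hclose, hn, hsm⟩ := hN u.length (by omega)
    have hcount := abs_occCount_prefixWord_div_sub_birkhoffAverage_le w x hn
    have hdist := hclose x hxX
    rw [hxu] at hcount
    rw [Real.dist_eq] at hdist
    rw [abs_lt]
    constructor <;> linarith [abs_lt.1 hdist, abs_le.1 hcount]

lemma measure_cylinder_eq_ofReal_of_freqTo {X : Set (ℤ → Bool)} {μ : Measure (ℤ → Bool)}
    (hμ : InvariantProbOn X μ) {w : List Bool} {δ : ℝ} (hf : FreqTo X w δ) :
    μ (cylinder X w) = ENNReal.ofReal δ := by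
  obtain ⟨_, hX, hinv⟩ := hμ
  have hC := (isClopen_cylinder_univ w).isOpen.measurableSet
  have hint := integral_eq_of_tendstoUniformlyOn_birkhoffAverage
    ⟨continuous_shift.measurable, hinv⟩ ((integrable_const 1).indicator hC) hX
    (freqTo_iff_tendstoUniformlyOn.1 hf)
  rw [integral_indicator_one hC] at hint
  rw [measure_cylinder_of_compl_eq_zero hX, ← hint, ofReal_measureReal]

lemma freqTo_measureReal_of_unique {X : Set (ℤ → Bool)} (hX : IsClosed X)
    (hsX : MapsTo shift X X) {μ : Measure (ℤ → Bool)}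
    (hμ : ∀ ν : Measure (ℤ → Bool), InvariantProbOn X ν → ν = μ) (w : List Bool) :
    FreqTo X w (μ.real (cylinder univ w)) := by
  have hC := isClopen_cylinder_univ w
  let g : (ℤ → Bool) →ᵇ ℝ := .mkOfCompact ⟨_, hC.continuous_indicator (continuous_const (y := 1))⟩
  have hint : ∫ y, g y ∂μ = μ.real (cylinder univ w) :=
    integral_indicator_one hC.isOpen.measurableSet
  rw [freqTo_iff_tendstoUniformlyOn, ← hint]
  exact tendstoUniformlyOn_birkhoffAverage_of_unique continuous_shift hX hsX hμ g

def centralCylinder (k : ℕ) (x : ℤ → Bool) : Set (ℤ → Bool) :=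
  {y | EqOn y x (Ico (-k : ℤ) k)}

lemma isOpen_centralCylinder (k : ℕ) (x : ℤ → Bool) : IsOpen (centralCylinder k x) := by
  have : centralCylinder k x = (Ico (-k : ℤ) k).pi fun i => {x i} := by
    ext y
    simp [centralCylinder, EqOn, Set.mem_pi]
  rw [this]
  exact isOpen_set_pi (finite_Ico _ _) fun i _ => isOpen_discrete _

lemma isPiSystem_centralCylinder :
    IsPiSystem (range fun p : ℕ × (ℤ → Bool) => centralCylinder p.1 p.2) := by
  rintro _ ⟨⟨k, x⟩, rfl⟩ _ ⟨⟨l, y⟩, rfl⟩ ⟨z, hzx, hzy⟩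
  refine ⟨(max k l, z), ?_⟩
  have hwindow : Ico (-(max k l : ℕ) : ℤ) (max k l : ℕ) = Ico (-k : ℤ) k ∪ Ico (-l : ℤ) l := by
    ext i
    simp only [mem_Ico, mem_union]
    omega
  ext v
  simp only [centralCylinder, mem_ofPred_eq, mem_inter_iff, hwindow, eqOn_union]
  exact and_congr ⟨fun h => h.trans hzx, fun h => h.trans hzx.symm⟩
    ⟨fun h => h.trans hzy, fun h => h.trans hzy.symm⟩

lemma isTopologicalBasis_centralCylinder :
    IsTopologicalBasis (range fun p : ℕ × (ℤ → Bool) => centralCylinder p.1 p.2) := by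
  refine isTopologicalBasis_of_isOpen_of_nhds (by
    rintro _ ⟨⟨k, x⟩, rfl⟩
    exact isOpen_centralCylinder k x) fun y U hy hU => ?_
  obtain ⟨I, u, hu, hIU⟩ := isOpen_pi_iff.1 hU y hy
  set k := I.sup Int.natAbs + 1
  have hIk (i : ℤ) (hi : i ∈ I) : i ∈ Ico (-k : ℤ) k := by
    have := Finset.le_sup (f := Int.natAbs) hi
    simp only [mem_Ico]
    omega
  exact ⟨centralCylinder k y, ⟨(k, y), rfl⟩, fun _ _ => rfl,
    fun z hz => hIU fun i hi => (hz (hIk i hi)).symm ▸ (hu i hi).2⟩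

lemma measurableSpace_eq_generateFrom_centralCylinder :
    (inferInstance : MeasurableSpace (ℤ → Bool)) =
      .generateFrom (range fun p : ℕ × (ℤ → Bool) => centralCylinder p.1 p.2) := by
  rw [BorelSpace.measurable_eq (α := ℤ → Bool)]
  exact borel_eq_generateFrom_of_subbasis isTopologicalBasis_centralCylinder.eq_generateFrom

lemma iterate_shift_preimage_centralCylinder (k : ℕ) (x : ℤ → Bool) :
    shift^[k] ⁻¹' centralCylinder k x =
      cylinder univ (prefixWord (fun j => x (j - k)) (2 * k)) := by
  ext y
  simp only [mem_preimage, centralCylinder, mem_ofPred_eq, mem_cylinder_iff_prefixWord,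
    mem_univ, true_and, length_prefixWord]
  simp only [prefixWord, List.ofFn_inj, funext_iff, Fin.forall_iff, EqOn, mem_Ico,
    shift_iterate_apply]
  constructor
  · intro h j hj
    simpa using @h ((j : ℤ) - k) (by omega)
  · intro h i hi
    obtain ⟨j, hj⟩ : ∃ j : ℕ, (j : ℤ) = i + k := ⟨(i + k).toNat, by omega⟩
    simpa [hj] using h j (by omega)

/-- Invariance moves every central cylinder onto some `[w]₀⁺`, and central cylinders form a
generating π-system. -/
lemma eq_of_measure_cylinder_univ_eq {μ ν : Measure (ℤ → Bool)} [IsProbabilityMeasure μ]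
    [IsProbabilityMeasure ν] (hμ : μ.map shift = μ) (hν : ν.map shift = ν)
    (h : ∀ w, μ (cylinder univ w) = ν (cylinder univ w)) : μ = ν := by
  refine ext_of_generate_finite _ measurableSpace_eq_generateFrom_centralCylinder
    isPiSystem_centralCylinder ?_ (by simp)
  rintro _ ⟨⟨k, x⟩, rfl⟩
  have hmeas := (isOpen_centralCylinder k x).measurableSet
  rw [← (MeasurePreserving.iterate ⟨continuous_shift.measurable, hμ⟩ k).measure_preimage
      hmeas.nullMeasurableSet,
    ← (MeasurePreserving.iterate ⟨continuous_shift.measurable, hν⟩ k).measure_preimage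
      hmeas.nullMeasurableSet,
    iterate_shift_preimage_centralCylinder, h]

lemma eq_of_freqTo {X : Set (ℤ → Bool)}
    (hfreq : ∀ w : List Bool, (cylinder X w).Nonempty → ∃ δ : ℝ, 0 ≤ δ ∧ FreqTo X w δ)
    {μ ν : Measure (ℤ → Bool)} (hμ : InvariantProbOn X μ) (hν : InvariantProbOn X ν) :
    μ = ν := by
  have := hμ.1
  have := hν.1
  refine eq_of_measure_cylinder_univ_eq hμ.2.2 hν.2.2 fun w => ?_
  rw [← measure_cylinder_of_compl_eq_zero hμ.2.1, ← measure_cylinder_of_compl_eq_zero hν.2.1]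
  rcases (cylinder X w).eq_empty_or_nonempty with hw | hw
  · simp [hw]
  · obtain ⟨δ, -, hδ⟩ := hfreq w hw
    rw [measure_cylinder_eq_ofReal_of_freqTo hμ hδ, measure_cylinder_eq_ofReal_of_freqTo hν hδ]

/-- A subshift is uniquely ergodic iff every word of its language has a uniform
frequency `δ ≥ 0` in all sufficiently long words of the language; moreover in that case
`δ` is the measure of the corresponding cylinder set under any invariant probability
measure on `X` (in particular under the unique one). -/
theorem uniquelyErgodic_iff_uniform_frequencies
    (X : Set (ℤ → Bool)) (hX : IsSubshift X) :
    ((∃! μ : Measure (ℤ → Bool), InvariantProbOn X μ) ↔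
      ∀ w : List Bool, (cylinder X w).Nonempty →
        ∃ δ : ℝ, 0 ≤ δ ∧ FreqTo X w δ) ∧
    ∀ μ : Measure (ℤ → Bool), InvariantProbOn X μ →
      ∀ (w : List Bool) (δ : ℝ), (cylinder X w).Nonempty → 0 ≤ δ → FreqTo X w δ →
        μ (cylinder X w) = ENNReal.ofReal δ := by
  obtain ⟨⟨x₀, hx₀⟩, hXc, hXs⟩ := hX
  have hsX : MapsTo shift X X := fun x hx => hXs ▸ mem_image_of_mem shift hx
  refine ⟨⟨fun ⟨μ, _, huniq⟩ w _ => ?_, fun hfreq => ?_⟩,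
    fun μ hμ w δ _ _ => measure_cylinder_eq_ofReal_of_freqTo hμ⟩
  · exact ⟨_, measureReal_nonneg, freqTo_measureReal_of_unique hXc hsX huniq w⟩
  · obtain ⟨-, -, ν, hν, -⟩ := exists_invariant_tendsto_birkhoffAverage continuous_shift hXc hsX
      (fun _ => hx₀) (n := fun k => k + 1) (fun k => k.succ_ne_zero) (tendsto_add_atTop_nat 1)
    exact ⟨ν, hν, fun μ hμ => eq_of_freqTo hfreq hμ hν⟩
end

section
/- Let s, t ∈ {0,1}^L be distinct words of the same length L ≥ 1. Suppose there exist a word v with |v| ≤ L and an integer d with 0 ≤ d ≤ 2L − |v| such that for each pair (p,q) ∈ {s,t}×{s,t}, the word v occurs as a subword of the concatenation pq exactly once, namely starting at position d. Then every z ∈ {0,1}^ℤ that can be written as a bi-infinite concatenation of the words s and t can be written in a unique way as such a concatenation: if (c, (β_n)_{n∈ℤ}) and (c', (β'_n)_{n∈ℤ}) are two decompositions of z, then c ≡ c' (mod L) and, setting k = (c − c')/L, β'_{n+k} = β_n for all n ∈ ℤ. -/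
/-- `(c, β)` is a decomposition of `z ∈ {0,1}^ℤ` as a bi-infinite concatenation of the
words `s` and `t`, each of length `L`: `0 ≤ c < L`, each `β n ∈ {s,t}`, and
`z (c + nL + r) = (β n) r` for all `n ∈ ℤ`, `0 ≤ r < L`. -/
def IsDecomp (s t : List Bool) (L : ℕ) (z : ℤ → Bool) (c : ℤ) (β : ℤ → List Bool) :
    Prop :=
  0 ≤ c ∧ c < (L : ℤ) ∧ (∀ n : ℤ, β n = s ∨ β n = t) ∧
    ∀ (n : ℤ) (r : ℕ), r < L → z (c + n * L + r) = (β n).getD r false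

theorem List.eq_of_length_eq_of_getD_eq {α : Type*} {a b : List α} {x : α}
    (hlen : a.length = b.length)
    (h : ∀ r < a.length, a.getD r x = b.getD r x) : a = b :=
  List.ext_getElem hlen fun r ha hb => by
    simpa only [List.getD_eq_getElem _ _ ha, List.getD_eq_getElem _ _ hb] using h r ha

theorem occursAt_iff_getD (v u : List Bool) (i : ℕ) :
    occursAt v u i ↔ i + v.length ≤ u.length ∧
      ∀ m < v.length, u.getD (i + m) false = v.getD m false := by
  refine and_congr_right fun hi => ⟨fun h m hm => ?_, fun h => ?_⟩
  · rw [← h]; grind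
  · apply List.eq_of_length_eq_of_getD_eq (x := false) (by simp; omega)
    intro m hm
    simp only [List.length_take, List.length_drop] at hm
    rw [← h m (by omega)]
    grind

def occursAtZ (v : List Bool) (z : ℤ → Bool) (j : ℤ) : Prop :=
  ∀ m < v.length, z (j + m) = v.getD m false

namespace IsDecomp

variable {s t : List Bool} {L : ℕ} {z : ℤ → Bool} {c : ℤ} {β : ℤ → List Bool}
  {v : List Bool} {d : ℕ}

theorem length_pos (h : IsDecomp s t L z c β) : 0 < L := by
  have := h.1.trans_lt h.2.1
  omega

theorem length_eq (h : IsDecomp s t L z c β) (hs : s.length = L) (ht : t.length = L) (n : ℤ) :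
    (β n).length = L := by
  rcases h.2.2.1 n with hn | hn <;> rw [hn] <;> assumption

theorem getD_append (h : IsDecomp s t L z c β) (hs : s.length = L) (ht : t.length = L)
    (n : ℤ) {r : ℕ} (hr : r < 2 * L) :
    z (c + n * L + r) = (β n ++ β (n + 1)).getD r false := by
  by_cases hrL : r < L
  · rw [h.2.2.2 n r hrL, List.getD_append _ _ _ _ (by rwa [h.length_eq hs ht])]
  · rw [List.getD_append_right _ _ _ _ (by rw [h.length_eq hs ht]; omega), h.length_eq hs ht,
      ← h.2.2.2 (n + 1) (r - L) (by omega)]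
    congr 1
    push_cast [Nat.cast_sub (not_lt.mp hrL)]
    ring

theorem occursAtZ_iff (h : IsDecomp s t L z c β) (hs : s.length = L) (ht : t.length = L)
    (n : ℤ) {i : ℕ} (hi : i + v.length ≤ 2 * L) :
    occursAtZ v z (c + n * L + i) ↔ occursAt v (β n ++ β (n + 1)) i := by
  rw [occursAt_iff_getD, List.length_append, h.length_eq hs ht, h.length_eq hs ht]
  refine ⟨fun hz => ⟨by omega, fun m hm => ?_⟩, fun ⟨_, hβ⟩ m hm => ?_⟩
  · rw [← hz m hm, ← h.getD_append hs ht n (by omega)]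
    push_cast
    ring_nf
  · rw [← hβ m hm, ← h.getD_append hs ht n (by omega)]
    push_cast
    ring_nf

theorem exists_eq_add_mul_add (h : IsDecomp s t L z c β) (j : ℤ) :
    ∃ (n : ℤ) (i : ℕ), i < L ∧ j = c + n * L + i := by
  have hL : (0 : ℤ) < L := by exact_mod_cast h.length_pos
  have := Int.emod_lt_of_pos (j - c) hL
  refine ⟨(j - c) / L, ((j - c) % L).toNat, by omega, ?_⟩
  rw [Int.toNat_of_nonneg (Int.emod_nonneg _ hL.ne'), Int.emod_def]
  ring

theorem apply_add_eq_of_sub_eq_mul {c' : ℤ} {β' : ℤ → List Bool}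
    (h : IsDecomp s t L z c β) (h' : IsDecomp s t L z c' β') (hs : s.length = L)
    (ht : t.length = L) {k : ℤ} (hk : c - c' = k * L) (n : ℤ) : β' (n + k) = β n := by
  refine List.eq_of_length_eq_of_getD_eq (x := false)
    (by rw [h.length_eq hs ht, h'.length_eq hs ht]) fun r hr => ?_
  rw [h'.length_eq hs ht] at hr
  rw [← h.2.2.2 n r hr, ← h'.2.2.2 (n + k) r hr]
  congr 1
  linear_combination -hk

theorem occursAtZ_add_mul_add (h : IsDecomp s t L z c β) (hs : s.length = L)
    (ht : t.length = L)
    (hocc : ∀ p q : List Bool, (p = s ∨ p = t) → (q = s ∨ q = t) → occursAt v (p ++ q) d)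
    (n : ℤ) : occursAtZ v z (c + n * L + d) := by
  have hpq := hocc (β n) (β (n + 1)) (h.2.2.1 n) (h.2.2.1 (n + 1))
  refine (h.occursAtZ_iff hs ht n ?_).2 hpq
  simpa [h.length_eq hs ht, two_mul] using hpq.1

theorem exists_eq_add_mul_add_of_occursAtZ (h : IsDecomp s t L z c β) (hs : s.length = L)
    (ht : t.length = L) (hv : v.length ≤ L)
    (huniq : ∀ p q : List Bool, (p = s ∨ p = t) → (q = s ∨ q = t) →
      ∀ i : ℕ, occursAt v (p ++ q) i → i = d)
    {j : ℤ} (hj : occursAtZ v z j) : ∃ n : ℤ, j = c + n * L + d := by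
  obtain ⟨n, i, hi, rfl⟩ := h.exists_eq_add_mul_add j
  have hocc := (h.occursAtZ_iff hs ht n (by omega)).1 hj
  exact ⟨n, by rw [huniq _ _ (h.2.2.1 n) (h.2.2.1 (n + 1)) i hocc]⟩

end IsDecomp

theorem unique_decipherability_general
    (L : ℕ) (s t : List Bool)
    (hs : s.length = L) (ht : t.length = L)
    (v : List Bool) (d : ℕ) (hv : v.length ≤ L)
    (hocc : ∀ p q : List Bool, (p = s ∨ p = t) → (q = s ∨ q = t) →
      occursAt v (p ++ q) d ∧ ∀ i : ℕ, occursAt v (p ++ q) i → i = d) :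
    ∀ (z : ℤ → Bool) (c c' : ℤ) (β β' : ℤ → List Bool),
      IsDecomp s t L z c β → IsDecomp s t L z c' β' →
      ∃ k : ℤ, c - c' = k * L ∧ ∀ n : ℤ, β' (n + k) = β n := by
  intro z c c' β β' h h'
  have hoccz : occursAtZ v z (c' + 0 * L + d) :=
    h'.occursAtZ_add_mul_add hs ht (fun p q hp hq => (hocc p q hp hq).1) 0
  obtain ⟨n, hn⟩ := h.exists_eq_add_mul_add_of_occursAtZ hs ht hv
    (fun p q hp hq => (hocc p q hp hq).2) hoccz
  have hk : c - c' = -n * L := by linear_combination -hn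
  exact ⟨-n, hk, h.apply_add_eq_of_sub_eq_mul h' hs ht hk⟩

/-- **Unique decipherability.** If `s ≠ t` are words of the same length `L ≥ 1` and
there are a word `v` with `|v| ≤ L` and a position `d` such that `v` occurs in each of
`ss`, `st`, `ts`, `tt` exactly once, namely at position `d`, then every bi-infinite
sequence that is a concatenation of `s`'s and `t`'s is so in a unique way. -/
theorem unique_decipherability
    (L : ℕ) (hL : 1 ≤ L) (s t : List Bool)
    (hs : s.length = L) (ht : t.length = L) (hst : s ≠ t)
    (v : List Bool) (d : ℕ) (hv : v.length ≤ L) (hd : d + v.length ≤ 2 * L)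
    (hocc : ∀ p q : List Bool, (p = s ∨ p = t) → (q = s ∨ q = t) →
      occursAt v (p ++ q) d ∧ ∀ i : ℕ, occursAt v (p ++ q) i → i = d) :
    ∀ (z : ℤ → Bool) (c c' : ℤ) (β β' : ℤ → List Bool),
      IsDecomp s t L z c β → IsDecomp s t L z c' β' →
      ∃ k : ℤ, c - c' = k * L ∧ ∀ n : ℤ, β' (n + k) = β n :=
  unique_decipherability_general L s t hs ht v d hv hocc
end
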